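/- arXiv:math/0603313 — 4 statements merged into one kernel-verified Lean document; each statement's English description precedes it below -/
import Mathlib

section
/- A symmetric polynomial matrix S(x) admits a factorization S(x) = T(x)ᵀ T(x) with T a polynomial matrix if and only if the scalar polynomial yᵀ S(x) y is a sum of squares in the combined variables (x, y). -/
/-!
View `ℝ[x, y]` as `ℝ[x][y]`. A factorization `S = Tᵀ T` writes `yᵀ S y` as `∑ₗ (T y)ₗ²`.
Conversely, if `yᵀ S y = ∑ₗ fₗ²`, setting `y = 0` gives `∑ₗ fₗ(x, 0)² = 0`, so every `fₗ`
vanishes at `y = 0` because `ℝ[x]` is formally real. Comparing Hessians in `y` at `y = 0` then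
gives `2 S = 2 Jᵀ J`, where `J` is the Jacobian of `f` with respect to `y` at `y = 0`.
-/

open MvPolynomial

theorem IsSumSq.map {R S F : Type*} [NonUnitalNonAssocSemiring R] [NonUnitalNonAssocSemiring S]
    [FunLike F R S] [NonUnitalRingHomClass F R S] (f : F) {s : R} (hs : IsSumSq s) :
    IsSumSq (f s) := by
  induction hs with
  | zero => simp
  | sq_add a _ ih => simpa using ih.sq_add (f a)

theorem IsFormallyReal.eq_zero_of_sum_sq_eq_zero {R κ : Type*} [CommRing R] [IsFormallyReal R]
    {s : Finset κ} {a : κ → R} (h : ∑ l ∈ s, a l ^ 2 = 0) {l : κ} (hl : l ∈ s) : a l = 0 := by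
  classical
  rw [← Finset.add_sum_erase s _ hl] at h
  have hsq : a l ^ 2 = 0 :=
    eq_zero_of_add_right (IsSquare.sq (a l)).isSumSq (IsSumSq.sum_sq _ a) h
  exact IsReduced.eq_zero _ ⟨2, hsq⟩

namespace MvPolynomial

instance isFormallyReal {σ R : Type*} [CommRing R] [LinearOrder R] [IsStrictOrderedRing R] :
    IsFormallyReal (MvPolynomial σ R) :=
  IsFormallyReal.of_eq_zero_of_eq_zero_of_mul_self_add fun {s a} hs h => funext fun v => by
    have hv : eval v a * eval v a + eval v s = 0 := by simpa using congrArg (eval v) h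
    simpa using IsFormallyReal.eq_zero_of_add_right (IsSumSq.mul_self _) (hs.map (eval v)) hv

theorem constantCoeff_pderiv_pderiv_sq {R σ : Type*} [CommSemiring R] [DecidableEq σ] (i j : σ)
    {g : MvPolynomial σ R} (hg : constantCoeff g = 0) :
    constantCoeff (pderiv i (pderiv j (g ^ 2))) =
      2 * constantCoeff (pderiv i g) * constantCoeff (pderiv j g) := by
  simp only [sq, pderiv_mul, map_add, map_mul, hg]
  ring

variable (R σ ι : Type*) [CommSemiring R]

noncomputable def sumAlgEquivRight :
    MvPolynomial (σ ⊕ ι) R ≃ₐ[R] MvPolynomial ι (MvPolynomial σ R) :=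
  (renameEquiv R (Equiv.sumComm σ ι)).trans (sumAlgEquiv R ι σ)

variable {R σ ι}

@[simp]
theorem sumAlgEquivRight_X_inr (i : ι) : sumAlgEquivRight R σ ι (X (Sum.inr i)) = X i := by
  simp [sumAlgEquivRight]

@[simp]
theorem sumAlgEquivRight_rename_inl (p : MvPolynomial σ R) :
    sumAlgEquivRight R σ ι (rename Sum.inl p) = C p := by
  induction p using MvPolynomial.induction_on with
  | C a => simp [sumAlgEquivRight, MvPolynomial.algebraMap_eq]
  | add p q hp hq => simp only [map_add, hp, hq]
  | mul_X p i hp => simp only [map_mul, hp, rename_X]; simp [sumAlgEquivRight]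

end MvPolynomial

namespace Matrix

section CommSemiring

variable {R ι κ : Type*} [CommSemiring R] [Fintype ι]

noncomputable def quadraticPoly (S : Matrix ι ι R) : MvPolynomial ι R :=
  ∑ i, ∑ j, X i * C (S i j) * X j

theorem quadraticPoly_transpose_mul [Fintype κ] (T : Matrix κ ι R) :
    (Tᵀ * T).quadraticPoly = ∑ l, (∑ j, C (T l j) * X j) ^ 2 := by
  simp only [quadraticPoly, mul_apply, transpose_apply, map_sum, map_mul, Finset.sum_mul,
    Finset.mul_sum, sq]
  symm
  rw [Finset.sum_comm]
  refine Finset.sum_congr rfl fun i _ => ?_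
  rw [Finset.sum_comm]
  exact Finset.sum_congr rfl fun j _ => Finset.sum_congr rfl fun l _ => by ring

theorem constantCoeff_pderiv_pderiv_quadraticPoly [DecidableEq ι] (S : Matrix ι ι R) (i j : ι) :
    constantCoeff (pderiv i (pderiv j S.quadraticPoly)) = S i j + S j i := by
  simp [quadraticPoly, pderiv_X, Pi.single_apply, Finset.sum_add_distrib]

theorem eq_transpose_mul_of_quadraticPoly_eq_sum_sq [IsAddTorsionFree R] [DecidableEq ι]
    [Fintype κ] {S : Matrix ι ι R} (hS : S.IsSymm) {g : κ → MvPolynomial ι R}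
    (hg : S.quadraticPoly = ∑ l, g l ^ 2) (hg0 : ∀ l, constantCoeff (g l) = 0) :
    S = (of fun l j => constantCoeff (pderiv j (g l)))ᵀ *
      of fun l j => constantCoeff (pderiv j (g l)) := by
  ext i j
  have hess := congrArg (fun q => constantCoeff (pderiv i (pderiv j q))) hg
  simp only [constantCoeff_pderiv_pderiv_quadraticPoly, map_sum,
    constantCoeff_pderiv_pderiv_sq i j (hg0 _), hS.apply i j] at hess
  refine nsmul_right_injective two_ne_zero ?_
  simp only [mul_apply, transpose_apply, of_apply, nsmul_eq_mul, Nat.cast_ofNat, Finset.mul_sum,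
    ← mul_assoc]
  rw [← hess, two_mul]

end CommSemiring

theorem constantCoeff_eq_zero_of_quadraticPoly_eq_sum_sq {R ι κ : Type*} [CommRing R]
    [IsFormallyReal R] [Fintype ι] [Fintype κ] {S : Matrix ι ι R} {g : κ → MvPolynomial ι R}
    (hg : S.quadraticPoly = ∑ l, g l ^ 2) (l : κ) : constantCoeff (g l) = 0 :=
  IsFormallyReal.eq_zero_of_sum_sq_eq_zero (a := fun l => constantCoeff (g l))
    (by simpa [quadraticPoly] using congrArg constantCoeff hg.symm) (Finset.mem_univ l)

end Matrix

/-- A symmetric polynomial matrix `S(x)` factors as `S(x) = T(x)ᵀ T(x)` for some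
polynomial matrix `T` if and only if the scalar polynomial `yᵀ S(x) y` (a polynomial
in the combined variables `(x, y)`) is a sum of squares. The combined polynomial
ring is `ℝ[x,y]` with variables indexed by `Fin n ⊕ Fin m`; `x`-variables are
injected via `Sum.inl` and `y j = X (Sum.inr j)`. -/
theorem sos_matrix_iff_factorization {n m : ℕ}
    (S : Matrix (Fin m) (Fin m) (MvPolynomial (Fin n) ℝ))
    (hsymm : S.transpose = S) :
    (∃ (p : ℕ) (T : Matrix (Fin p) (Fin m) (MvPolynomial (Fin n) ℝ)),
        S = T.transpose * T) ↔
      ∃ (N : ℕ) (f : Fin N → MvPolynomial (Fin n ⊕ Fin m) ℝ),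
        (∑ i, ∑ j,
            (MvPolynomial.X (Sum.inr i) : MvPolynomial (Fin n ⊕ Fin m) ℝ) *
              MvPolynomial.rename Sum.inl (S i j) * MvPolynomial.X (Sum.inr j)) =
          ∑ l, (f l) ^ 2 := by
  set e := sumAlgEquivRight ℝ (Fin n) (Fin m)
  have hq : e (∑ i, ∑ j, X (Sum.inr i) * rename Sum.inl (S i j) * X (Sum.inr j)) =
      S.quadraticPoly := by
    simp [e, Matrix.quadraticPoly]
  constructor
  · rintro ⟨p, T, rfl⟩
    refine ⟨p, fun l => e.symm (∑ j, C (T l j) * X j), e.injective ?_⟩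
    simp only [hq, Matrix.quadraticPoly_transpose_mul, map_sum, map_pow, e.apply_symm_apply]
  · rintro ⟨N, f, hf⟩
    have hg : S.quadraticPoly = ∑ l, e (f l) ^ 2 := by simp only [← hq, hf, map_sum, map_pow]
    exact ⟨N, _, Matrix.eq_transpose_mul_of_quadraticPoly_eq_sum_sq hsymm hg
      (Matrix.constantCoeff_eq_zero_of_quadraticPoly_eq_sum_sq hg)⟩
end

section
/- Suppose M(x) is symmetric with M(x) ⪰ εI for all x and R(x) = Df(x)ᵀM(x) + M(x)Df(x) + Ṁ(x) satisfies R(x) ⪯ −βM(x) for all x, with β > 0. Then for any solution x(t) of ẋ = f(x) and any solution δx of the variational equation, δx(t)ᵀ M(x(t)) δx(t) ≤ e^{−βt} δx(0)ᵀ M(x(0)) δx(0). -/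
/-!
Along the trajectory, `V t = δ(t)ᵀ M(x(t)) δ(t)` has derivative `δᵀ R(x) δ`: the product rule
gives `(Jδ)ᵀ M δ + δᵀ Ṁ δ + δᵀ M J δ`, and the chain rule identifies `d/dt M(x(t))` with `Ṁ(x(t))`.
The hypothesis on `R` turns this into `V' ≤ -β V`, so `e^{βt} V t` is antitone.
-/

open Matrix

section Calculus

variable {ι : Type*} [Fintype ι] {t : ℝ}

theorem HasDerivAt.dotProduct {u v : ℝ → ι → ℝ} {u' v' : ι → ℝ}
    (hu : HasDerivAt u u' t) (hv : HasDerivAt v v' t) :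
    HasDerivAt (fun s => u s ⬝ᵥ v s) (u' ⬝ᵥ v t + u t ⬝ᵥ v') t := by
  have hsum := HasDerivAt.fun_sum (u := Finset.univ) fun i _ =>
    (hasDerivAt_pi.mp hu i).fun_mul (hasDerivAt_pi.mp hv i)
  exact hsum.congr_deriv Finset.sum_add_distrib

theorem HasDerivAt.mulVec {m : Type*} {A : ℝ → Matrix m ι ℝ} {A' : Matrix m ι ℝ} {v : ℝ → ι → ℝ}
    {v' : ι → ℝ} (hA : ∀ i j, HasDerivAt (fun s => A s i j) (A' i j) t)
    (hv : HasDerivAt v v' t) :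
    HasDerivAt (fun s => A s *ᵥ v s) (A' *ᵥ v t + A t *ᵥ v') t :=
  hasDerivAt_pi.mpr fun i => (hasDerivAt_pi.mpr (hA i)).dotProduct hv

theorem le_exp_mul_of_hasDerivAt_le_neg_mul {V V' : ℝ → ℝ} {β : ℝ}
    (hV : ∀ s, HasDerivAt V (V' s) s) (hV' : ∀ s, V' s ≤ -β * V s) (ht : 0 ≤ t) :
    V t ≤ Real.exp (-β * t) * V 0 := by
  have hW : ∀ s, HasDerivAt (fun s => Real.exp (β * s) * V s)
      (Real.exp (β * s) * (β * V s + V' s)) s := fun s => by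
    have := (((hasDerivAt_id s).const_mul β).exp).fun_mul (hV s)
    exact this.congr_deriv (by simp only [id, mul_one]; ring)
  have hW' : Antitone fun s => Real.exp (β * s) * V s :=
    antitone_of_deriv_nonpos (fun s => (hW s).differentiableAt) fun s => by
      rw [(hW s).deriv]
      exact mul_nonpos_of_nonneg_of_nonpos (Real.exp_pos _).le (by linarith [hV' s])
  have hdecay : Real.exp (β * t) * V t ≤ V 0 := by
    simpa using hW' ht
  calc V t = Real.exp (-β * t) * (Real.exp (β * t) * V t) := by
        rw [← mul_assoc, ← Real.exp_add, neg_mul, neg_add_cancel, Real.exp_zero, one_mul]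
    _ ≤ Real.exp (-β * t) * V 0 := mul_le_mul_of_nonneg_left hdecay (Real.exp_pos _).le

end Calculus

theorem Matrix.mulVec_dotProduct_add_dotProduct_mulVec {ι R : Type*} [Fintype ι] [CommRing R]
    (J M D : Matrix ι ι R) (v : ι → R) :
    J *ᵥ v ⬝ᵥ M *ᵥ v + v ⬝ᵥ (D *ᵥ v + M *ᵥ (J *ᵥ v)) = v ⬝ᵥ (Jᵀ * M + M * J + D) *ᵥ v := by
  simp only [add_mulVec, ← mulVec_mulVec, dotProduct_add]
  rw [dotProduct_mulVec _ Jᵀ, vecMul_transpose]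
  ring

theorem contraction_metric_decay_general {n : ℕ} (f : (Fin n → ℝ) → (Fin n → ℝ))
    (M : (Fin n → ℝ) → Matrix (Fin n) (Fin n) ℝ)
    (hM : ∀ i j, ContDiff ℝ 1 fun z => M z i j)
    (β : ℝ)
    (J : (Fin n → ℝ) → Matrix (Fin n) (Fin n) ℝ)
    (Mdot R : (Fin n → ℝ) → Matrix (Fin n) (Fin n) ℝ)
    (hMdot : ∀ z i j, Mdot z i j = fderiv ℝ (fun w => M w i j) z (f z))
    (hR : ∀ z, R z = (J z).transpose * M z + M z * J z + Mdot z)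
    (hRneg : ∀ (z : Fin n → ℝ) (v : Fin n → ℝ),
      dotProduct v ((R z).mulVec v) ≤ -β * dotProduct v ((M z).mulVec v))
    (x δ : ℝ → (Fin n → ℝ))
    (hx : ∀ t, HasDerivAt x (f (x t)) t)
    (hδ : ∀ t, HasDerivAt δ ((J (x t)).mulVec (δ t)) t) :
    ∀ t : ℝ, 0 ≤ t →
      dotProduct (δ t) ((M (x t)).mulVec (δ t))
        ≤ Real.exp (-β * t) * dotProduct (δ 0) ((M (x 0)).mulVec (δ 0)) := by
  intro t ht
  refine le_exp_mul_of_hasDerivAt_le_neg_mul (fun s => ?_) (fun s => hRneg (x s) (δ s)) ht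
  have hMx : ∀ i j, HasDerivAt (fun s => M (x s) i j) (Mdot (x s) i j) s := fun i j => by
    rw [hMdot]
    exact ((hM i j).differentiable one_ne_zero (x s)).hasFDerivAt.comp_hasDerivAt s (hx s)
  have hV := (hδ s).dotProduct ((hδ s).mulVec hMx)
  rwa [mulVec_dotProduct_add_dotProduct_mulVec, ← hR] at hV

/-- If `M(x) ⪰ εI` and the contraction matrix
`R(x) = Df(x)ᵀ M(x) + M(x) Df(x) + Ṁ(x)` satisfies `R(x) ⪯ -β M(x)` for all `x`
(with `ε, β > 0`), then along any solution `x(t)` of `ẋ = f(x)` and any solution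
`δx` of the variational equation, `δxᵀ M(x(t)) δx ≤ e^{-βt} δx(0)ᵀ M(x(0)) δx(0)`
for `t ≥ 0`. -/
theorem contraction_metric_decay {n : ℕ} (f : (Fin n → ℝ) → (Fin n → ℝ))
    (M : (Fin n → ℝ) → Matrix (Fin n) (Fin n) ℝ)
    (hf : ContDiff ℝ 1 f) (hM : ∀ i j, ContDiff ℝ 1 fun z => M z i j)
    (hMsymm : ∀ z, (M z).transpose = M z)
    (ε β : ℝ) (hε : 0 < ε) (hβ : 0 < β)
    (J : (Fin n → ℝ) → Matrix (Fin n) (Fin n) ℝ)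
    (Mdot R : (Fin n → ℝ) → Matrix (Fin n) (Fin n) ℝ)
    (hJ : ∀ z i j, J z i j = fderiv ℝ f z (Pi.single j 1) i)
    (hMdot : ∀ z i j, Mdot z i j = fderiv ℝ (fun w => M w i j) z (f z))
    (hR : ∀ z, R z = (J z).transpose * M z + M z * J z + Mdot z)
    (hMpos : ∀ (z : Fin n → ℝ) (v : Fin n → ℝ),
      ε * dotProduct v v ≤ dotProduct v ((M z).mulVec v))
    (hRneg : ∀ (z : Fin n → ℝ) (v : Fin n → ℝ),
      dotProduct v ((R z).mulVec v) ≤ -β * dotProduct v ((M z).mulVec v))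
    (x δ : ℝ → (Fin n → ℝ))
    (hx : ∀ t, HasDerivAt x (f (x t)) t)
    (hδ : ∀ t, HasDerivAt δ ((J (x t)).mulVec (δ t)) t) :
    ∀ t : ℝ, 0 ≤ t →
      dotProduct (δ t) ((M (x t)).mulVec (δ t))
        ≤ Real.exp (-β * t) * dotProduct (δ 0) ((M (x 0)).mulVec (δ 0)) :=
  contraction_metric_decay_general f M hM β J Mdot R hMdot hR hRneg x δ hx hδ
end

section
/- For the Van der Pol system f(x₁,x₂) = (x₂, −α(x₁² + k)x₂ − ω²x₁) with α > 0, ω ≠ 0, there is no constant symmetric matrix M such that M ≻ 0 and DfᵀM + MDf ≺ 0 for all (x₁,x₂) ∈ ℝ². -/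
open Matrix

/-! Where `x₁ x₂ = -ω² / (2α)` the first column of the Jacobian vanishes, so `e₁` lies in its
kernel, and a Lyapunov form `Jᵀ M + M J` vanishes on a kernel vector of `J` whatever `M` is. -/

theorem Matrix.dotProduct_transpose_mul_add_mul_mulVec_of_mulVec_eq_zero {n R : Type*}
    [Fintype n] [CommSemiring R] (J M : Matrix n n R) {v : n → R} (hv : J *ᵥ v = 0) :
    v ⬝ᵥ ((Jᵀ * M + M * J) *ᵥ v) = 0 := by
  rw [add_mulVec, dotProduct_add, ← mulVec_mulVec, ← mulVec_mulVec, hv, mulVec_zero,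
    dotProduct_zero, dotProduct_mulVec, vecMul_transpose, hv, zero_dotProduct, add_zero]

theorem vdp_no_constant_contraction_metric_general (α ω k : ℝ) (hα : 0 < α) :
    ¬ ∃ a b c : ℝ,
      (!![a, b; b, c] : Matrix (Fin 2) (Fin 2) ℝ).PosDef ∧
      ∀ x₁ x₂ : ℝ, ∀ v : Fin 2 → ℝ, v ≠ 0 →
        dotProduct v
          ((((!![0, 1; -ω ^ 2 - 2 * α * x₁ * x₂, -α * (x₁ ^ 2 + k)] :
              Matrix (Fin 2) (Fin 2) ℝ)).transpose * !![a, b; b, c] +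
            !![a, b; b, c] *
              !![0, 1; -ω ^ 2 - 2 * α * x₁ * x₂, -α * (x₁ ^ 2 + k)]).mulVec v) < 0 := by
  rintro ⟨a, b, c, -, h⟩
  have hlt := h 1 (-ω ^ 2 / (2 * α)) ![1, 0] (by simp)
  have hfirst_column : -ω ^ 2 - 2 * α * 1 * (-ω ^ 2 / (2 * α)) = 0 := by
    field_simp
    ring
  have hkernel : !![0, 1; 0, -α * (1 ^ 2 + k)] *ᵥ ![1, 0] = 0 := by
    ext i
    fin_cases i <;> simp
  rw [hfirst_column, dotProduct_transpose_mul_add_mul_mulVec_of_mulVec_eq_zero _ _ hkernel] at hlt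
  exact lt_irrefl 0 hlt

/-- For the Van der Pol system `f(x₁,x₂) = (x₂, -α(x₁²+k)x₂ - ω²x₁)` with `α > 0`
and `ω ≠ 0`, there is no constant symmetric matrix `M = [[a,b],[b,c]]` with
`M ≻ 0` and `Df(x)ᵀM + MDf(x) ≺ 0` for all `(x₁,x₂) ∈ ℝ²`. -/
theorem vdp_no_constant_contraction_metric (α ω k : ℝ) (hα : 0 < α) (hω : ω ≠ 0) :
    ¬ ∃ a b c : ℝ,
      (!![a, b; b, c] : Matrix (Fin 2) (Fin 2) ℝ).PosDef ∧
      ∀ x₁ x₂ : ℝ, ∀ v : Fin 2 → ℝ, v ≠ 0 →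
        dotProduct v
          ((((!![0, 1; -ω ^ 2 - 2 * α * x₁ * x₂, -α * (x₁ ^ 2 + k)] :
              Matrix (Fin 2) (Fin 2) ℝ)).transpose * !![a, b; b, c] +
            !![a, b; b, c] *
              !![0, 1; -ω ^ 2 - 2 * α * x₁ * x₂, -α * (x₁ ^ 2 + k)]).mulVec v) < 0 :=
  vdp_no_constant_contraction_metric_general α ω k hα
end

section
/- For the driven Van der Pol system ẏ₁ = y₂, ẏ₂ = −α(y₁² + k + η)y₂ − ω²y₁ + αη x₂(t), with α > 0, k + η ≥ 0, ω ≠ 0, the matrix M(y₁) = [[ω² + α²(y₁² + k + η)², α(y₁² + k + η)], [α(y₁² + k + η), 1]] is positive definite for all y₁, and R = Ṁ + DfᵀM + MDf = [[−2αω²(y₁² + k + η), 0], [0, 0]], which is negative semidefinite. -/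
/-
The metric `M = [[ω² + b², b], [b, 1]]`, `b = α(y₁² + k + η)`, has lower-right entry `1` and
determinant `ω²`, so it is positive definite as soon as `ω ≠ 0`. In `Ṁ + DfᵀM + MDf` the entries
`2αy₁y₂` of `Ṁ` cancel exactly against the contribution of the entry `-2αy₁y₂` of `Df`, leaving
only the damping term `-2ω²b` in the upper-left corner, which is `≤ 0` since `α > 0` and
`k + η ≥ 0`.
-/

open Matrix

namespace Matrix

theorem dotProduct_mulVec_fin_two {R : Type*} [CommRing R] (a b c d : R) (v : Fin 2 → R) :
    v ⬝ᵥ (!![a, b; c, d] *ᵥ v) = a * v 0 ^ 2 + (b + c) * v 0 * v 1 + d * v 1 ^ 2 := by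
  simp only [vec2_dotProduct, mulVec, of_apply, cons_val', cons_val_zero, cons_val_one,
    empty_val', cons_val_fin_one]
  ring

variable {K : Type*} [CommRing K] [LinearOrder K] [IsStrictOrderedRing K]

theorem posDef_fin_two_of_pos_of_det_pos [StarRing K] [TrivialStar K] {a b d : K} (hd : 0 < d)
    (hdet : 0 < a * d - b ^ 2) : (!![a, b; b, d]).PosDef := by
  refine PosDef.of_dotProduct_mulVec_pos ?_ fun v hv => ?_
  · rw [isHermitian_iff_isSymm]
    ext i j
    fin_cases i <;> fin_cases j <;> rfl
  rw [star_trivial, dotProduct_mulVec_fin_two]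
  have completed_square : d * (a * v 0 ^ 2 + (b + b) * v 0 * v 1 + d * v 1 ^ 2)
      = (a * d - b ^ 2) * v 0 ^ 2 + (b * v 0 + d * v 1) ^ 2 := by ring
  refine pos_of_mul_pos_right ?_ hd.le
  rw [completed_square]
  rcases eq_or_ne (v 0) 0 with h0 | h0
  · have h1 : v 1 ≠ 0 := fun h1 => hv (by ext i; fin_cases i <;> assumption)
    rw [h0]
    simp only [ne_eq, OfNat.ofNat_ne_zero, not_false_eq_true, zero_pow, mul_zero, zero_add]
    positivity
  · exact add_pos_of_pos_of_nonneg (mul_pos hdet (by positivity)) (sq_nonneg _)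

theorem dotProduct_mulVec_fin_two_nonpos {a : K} (ha : a ≤ 0) (v : Fin 2 → K) :
    v ⬝ᵥ (!![a, 0; 0, 0] *ᵥ v) ≤ 0 := by
  rw [dotProduct_mulVec_fin_two]
  nlinarith [sq_nonneg (v 0)]

end Matrix

/-- `b` is the damping coefficient and `c = ḃ`, so the first matrix is `Ṁ` for
`M = [[w + b², b], [b, 1]]`; `c` also appears in the Jacobian because `∂(b y₂)/∂y₁ = c`. -/
theorem damped_oscillator_metric_identity {R : Type*} [CommRing R] (w b c : R) :
    !![2 * b * c, c; c, 0] + (!![0, 1; -w - c, -b])ᵀ * !![w + b ^ 2, b; b, 1] +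
      !![w + b ^ 2, b; b, 1] * !![0, 1; -w - c, -b] = !![-2 * w * b, 0; 0, 0] := by
  ext i j
  fin_cases i <;> fin_cases j <;> simp [mul_apply] <;> ring

/-- For the driven Van der Pol system `ẏ₁ = y₂`,
`ẏ₂ = -α(y₁²+k+η)y₂ - ω²y₁ + αη x₂(t)` with `α > 0`, `k + η ≥ 0`, `ω ≠ 0`,
the metric `M(y₁) = [[ω² + α²(y₁²+k+η)², α(y₁²+k+η)], [α(y₁²+k+η), 1]]` is
positive definite, and `R = Ṁ + DfᵀM + MDf = [[-2αω²(y₁²+k+η), 0], [0, 0]]`,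
which is negative semidefinite. Here `Df = [[0,1],[-ω²-2αy₁y₂, -α(y₁²+k+η)]]`
and `Ṁ = (∂M/∂y₁)·y₂`. -/
theorem vdp_driven_semicontracting (α k η ω : ℝ)
    (hα : 0 < α) (hkη : 0 ≤ k + η) (hω : ω ≠ 0) :
    ∀ y₁ y₂ : ℝ,
      (!![ω ^ 2 + (α * (y₁ ^ 2 + k + η)) ^ 2, α * (y₁ ^ 2 + k + η);
          α * (y₁ ^ 2 + k + η), 1] : Matrix (Fin 2) (Fin 2) ℝ).PosDef ∧
      ((!![2 * (α * (y₁ ^ 2 + k + η)) * (2 * α * y₁) * y₂, 2 * α * y₁ * y₂;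
           2 * α * y₁ * y₂, 0] : Matrix (Fin 2) (Fin 2) ℝ) +
         (!![0, 1; -ω ^ 2 - 2 * α * y₁ * y₂, -α * (y₁ ^ 2 + k + η)] :
             Matrix (Fin 2) (Fin 2) ℝ).transpose *
           !![ω ^ 2 + (α * (y₁ ^ 2 + k + η)) ^ 2, α * (y₁ ^ 2 + k + η);
              α * (y₁ ^ 2 + k + η), 1] +
         !![ω ^ 2 + (α * (y₁ ^ 2 + k + η)) ^ 2, α * (y₁ ^ 2 + k + η);
            α * (y₁ ^ 2 + k + η), 1] *
           !![0, 1; -ω ^ 2 - 2 * α * y₁ * y₂, -α * (y₁ ^ 2 + k + η)]) =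
        !![-2 * α * ω ^ 2 * (y₁ ^ 2 + k + η), 0; 0, 0] ∧
      ∀ v : Fin 2 → ℝ,
        dotProduct v
          ((!![-2 * α * ω ^ 2 * (y₁ ^ 2 + k + η), 0; 0, 0] :
              Matrix (Fin 2) (Fin 2) ℝ).mulVec v) ≤ 0 := by
  intro y₁ y₂
  set q := y₁ ^ 2 + k + η
  have hq : 0 ≤ q := by linarith [sq_nonneg y₁]
  have hdet : 0 < (ω ^ 2 + (α * q) ^ 2) * 1 - (α * q) ^ 2 := by
    rw [mul_one, add_sub_cancel_right]
    positivity
  have hdamp : -2 * α * ω ^ 2 * q ≤ 0 := by nlinarith [mul_nonneg hα.le hq, sq_nonneg ω]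
  refine ⟨posDef_fin_two_of_pos_of_det_pos one_pos hdet, ?_,
    dotProduct_mulVec_fin_two_nonpos hdamp⟩
  rw [show -2 * α * ω ^ 2 * q = -2 * ω ^ 2 * (α * q) by ring, neg_mul α,
    show 2 * (α * q) * (2 * α * y₁) * y₂ = 2 * (α * q) * (2 * α * y₁ * y₂) by ring]
  exact damped_oscillator_metric_identity _ _ _
end
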